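/- Let X be a Priestley space. Then CC(X) (with the Vietoris topology and the order ⊴) is a bi-Esakia space if and only if X is a co-Esakia space. Equivalently: the ⊴-upset ⇑𝒱 = {C ∈ CC(X) | ∃ K ∈ 𝒱, K ⊴ C} of every clopen subset 𝒱 of CC(X) is clopen if and only if the upset ↑V = {x ∈ X | ∃ y ∈ V, y ≤ x} of every clopen subset V of X is clopen. -/
import Mathlib


open Set TopologicalSpace

/-- The set of nonempty closed chains of a Priestley space `X`. -/
def CC (X : Type*) [TopologicalSpace X] [Preorder X] : Set (Set X) :=
  {C | C.Nonempty ∧ IsClosed C ∧ IsChain (· ≤ ·) C}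

variable {X : Type*} [TopologicalSpace X] [Preorder X]

/-- `□A = {C ∈ CC(X) | C ⊆ A}`. -/
def ccBox (A : Set X) : Set ↥(CC X) := {C | (C : Set X) ⊆ A}

/-- `◇A = {C ∈ CC(X) | C ∩ A ≠ ∅}`. -/
def ccDia (A : Set X) : Set ↥(CC X) := {C | ((C : Set X) ∩ A).Nonempty}

/-- The Vietoris topology on `CC X`, generated by the subbasis `{□V, ◇V | V clopen}`. -/
instance ccTop : TopologicalSpace ↥(CC X) :=
  generateFrom {S | ∃ V : Set X, IsClopen V ∧ (S = ccBox V ∨ S = ccDia V)}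

/-- The order `⊴` on closed chains: `C₁ ⊴ C₂` iff `C₂ ⊆ C₁` and `C₂` is an upset in `C₁`. -/
def lec (C₁ C₂ : Set X) : Prop :=
  C₂ ⊆ C₁ ∧ ∀ x ∈ C₂, ∀ y ∈ C₁, x ≤ y → y ∈ C₂

/-- The `⊴`-upset generated by a collection of closed chains. -/
def ccUp (𝒜 : Set ↥(CC X)) : Set ↥(CC X) := {C | ∃ K ∈ 𝒜, lec (K : Set X) (C : Set X)}

/- ### Auxiliary lemmas -/

section Subbasis

variable {Z : Type*} [TopologicalSpace Z] [Preorder Z]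

lemma ccSub_def : (ccTop : TopologicalSpace ↥(CC Z)) =
    generateFrom {S | ∃ V : Set Z, IsClopen V ∧ (S = ccBox V ∨ S = ccDia V)} := rfl

lemma isOpen_ccBox {V : Set Z} (hV : IsClopen V) : IsOpen (ccBox V : Set ↥(CC Z)) :=
  isOpen_generateFrom_of_mem ⟨V, hV, Or.inl rfl⟩

lemma isOpen_ccDia {V : Set Z} (hV : IsClopen V) : IsOpen (ccDia V : Set ↥(CC Z)) :=
  isOpen_generateFrom_of_mem ⟨V, hV, Or.inr rfl⟩

lemma compl_ccBox (V : Set Z) : (ccBox V : Set ↥(CC Z))ᶜ = ccDia Vᶜ := by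
  ext C
  simp [ccBox, ccDia, inter_compl_nonempty_iff]

lemma compl_ccDia (V : Set Z) : (ccDia V : Set ↥(CC Z))ᶜ = ccBox Vᶜ := by
  ext C
  simp only [mem_compl_iff, ccBox, ccDia, mem_setOf_eq, not_nonempty_iff_eq_empty,
    ← disjoint_iff_inter_eq_empty, subset_compl_iff_disjoint_right]

lemma isClopen_ccBox {V : Set Z} (hV : IsClopen V) : IsClopen (ccBox V : Set ↥(CC Z)) := by
  refine ⟨?_, isOpen_ccBox hV⟩
  rw [← isOpen_compl_iff, compl_ccBox]
  exact isOpen_ccDia hV.compl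

lemma isClopen_ccDia {V : Set Z} (hV : IsClopen V) : IsClopen (ccDia V : Set ↥(CC Z)) := by
  refine ⟨?_, isOpen_ccDia hV⟩
  rw [← isOpen_compl_iff, compl_ccDia]
  exact isOpen_ccBox hV.compl

end Subbasis

section Priestley

variable {Y : Type*} [TopologicalSpace Y] [PartialOrder Y] [CompactSpace Y] [PriestleySpace Y]

lemma sep_point {x y : Y} (h : x ≠ y) : ∃ W : Set Y, IsClopen W ∧ x ∈ W ∧ y ∉ W := by
  rcases em (x ≤ y) with hxy | hxy
  · have hyx : ¬ y ≤ x := fun h' => h (le_antisymm hxy h')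
    obtain ⟨U, hU, _, hy, hx⟩ := exists_isClopen_upper_of_not_le hyx
    exact ⟨Uᶜ, hU.compl, hx, fun hy' => hy' hy⟩
  · obtain ⟨U, hU, _, hx, hy⟩ := exists_isClopen_upper_of_not_le hxy
    exact ⟨U, hU, hx, hy⟩

instance (priority := 100) priestley_t1 : T1Space Y := by
  refine t1Space_iff_exists_open.mpr fun x y h => ?_
  obtain ⟨W, hW, hx, hy⟩ := sep_point h
  exact ⟨W, hW.2, hx, hy⟩

lemma sep_closed {F : Set Y} (hF : IsClosed F) {x : Y} (hx : x ∉ F) :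
    ∃ W : Set Y, IsClopen W ∧ x ∈ W ∧ W ∩ F = ∅ := by
  classical
  have hsep : ∀ z : F, ∃ W : Set Y, IsClopen W ∧ x ∈ W ∧ z.val ∉ W := by
    intro z
    exact sep_point (fun e => hx (e ▸ z.2))
  choose W hWc hWx hWz using hsep
  have hcov : F ⊆ ⋃ z : F, (W z)ᶜ := by
    intro z hz
    exact mem_iUnion.2 ⟨⟨z, hz⟩, hWz ⟨z, hz⟩⟩
  obtain ⟨t, ht⟩ := hF.isCompact.elim_finite_subcover (fun z : F => (W z)ᶜ)
    (fun z => (hWc z).compl.2) hcov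
  refine ⟨⋂ z ∈ t, W z, isClopen_biInter_finset fun z _ => hWc z, mem_iInter₂.2 fun z _ => hWx z, ?_⟩
  ext y
  simp only [mem_inter_iff, mem_iInter, mem_empty_iff_false, iff_false, not_and]
  intro hyW hyF
  obtain ⟨z, hzt, hzy⟩ := mem_iUnion₂.1 (ht hyF)
  exact hzy (hyW z hzt)

lemma isClosed_le_pt (c : Y) : IsClosed {y : Y | y ≤ c} := by
  rw [← isOpen_compl_iff]
  rw [isOpen_iff_forall_mem_open]
  intro y hy
  obtain ⟨U, hU, hUu, hyU, hcU⟩ := exists_isClopen_upper_of_not_le hy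
  exact ⟨U, fun u hu huc => hcU (hUu huc hu), hU.2, hyU⟩

lemma chain_min {C : Set Y} (hC : C ∈ CC Y) : ∃ m ∈ C, ∀ c ∈ C, m ≤ c := by
  obtain ⟨hne, hcl, hch⟩ := hC
  haveI : Nonempty C := hne.to_subtype
  have h := IsCompact.nonempty_iInter_of_directed_nonempty_isCompact_isClosed
      (fun c : C => {y : Y | y ≤ c.val} ∩ C) ?_ ?_ ?_ ?_
  · obtain ⟨m, hm⟩ := h
    simp only [mem_iInter, mem_inter_iff, mem_setOf_eq] at hm
    have hm0 := hm ⟨hne.some, hne.some_mem⟩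
    exact ⟨m, hm0.2, fun c hc => (hm ⟨c, hc⟩).1⟩
  · intro a b
    rcases eq_or_ne a.val b.val with hab | hab
    · exact ⟨a, subset_rfl, fun y hy => ⟨hab ▸ hy.1, hy.2⟩⟩
    rcases hch a.2 b.2 hab with h | h
    · exact ⟨a, subset_rfl, fun y hy => ⟨hy.1.trans h, hy.2⟩⟩
    · exact ⟨b, fun y hy => ⟨hy.1.trans h, hy.2⟩, subset_rfl⟩
  · exact fun c => ⟨c.val, le_rfl, c.2⟩
  · exact fun c => ((isClosed_le_pt c.val).inter hcl).isCompact
  · exact fun c => (isClosed_le_pt c.val).inter hcl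

end Priestley

section Compactness

variable {Y : Type*} [TopologicalSpace Y] [PartialOrder Y] [CompactSpace Y] [PriestleySpace Y]

instance ccCompact : CompactSpace ↥(CC Y) := by
  classical
  refine ⟨isCompact_iff_ultrafilter_le_nhds.mpr fun 𝒰 _ => ?_⟩
  set C : Set Y := {x | ∀ V : Set Y, IsClopen V → x ∈ V → ccDia V ∈ 𝒰} with hCdef
  have key : ∀ V : Set Y, IsClopen V → ccDia V ∈ 𝒰 → (C ∩ V).Nonempty := by
    intro V hV hdV
    by_contra hemp
    have hx : ∀ x : V, ∃ Vx : Set Y, IsClopen Vx ∧ x.val ∈ Vx ∧ ccDia Vx ∉ 𝒰 := by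
      intro x
      have hxC : x.val ∉ C := fun hc => hemp ⟨x.val, hc, x.2⟩
      rw [hCdef, mem_setOf_eq] at hxC
      push_neg at hxC
      obtain ⟨Vx, h1, h2, h3⟩ := hxC
      exact ⟨Vx, h1, h2, h3⟩
    choose W hWc hWx hWn using hx
    obtain ⟨t, ht⟩ := hV.1.isCompact.elim_finite_subcover (fun x : V => W x)
      (fun x => (hWc x).2) (fun z hz => mem_iUnion.2 ⟨⟨z, hz⟩, hWx ⟨z, hz⟩⟩)
    have hmem : (⋂ x ∈ t, (ccDia (W x) : Set ↥(CC Y))ᶜ) ∈ 𝒰 :=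
      (Filter.biInter_finset_mem t).2 fun x _ => Ultrafilter.compl_mem_iff_notMem.2 (hWn x)
    obtain ⟨K, hK1, hK2⟩ := Ultrafilter.nonempty_of_mem (Filter.inter_mem hmem hdV)
    obtain ⟨z, hzK, hzV⟩ := hK2
    obtain ⟨x, hxt, hzW⟩ := mem_iUnion₂.1 (ht hzV)
    exact (mem_iInter₂.1 hK1 x hxt) ⟨z, hzK, hzW⟩
  have hCcc : C ∈ CC Y := by
    refine ⟨?_, ?_, ?_⟩
    · have hu : (ccDia (univ : Set Y) : Set ↥(CC Y)) ∈ 𝒰 := by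
        have : (ccDia (univ : Set Y) : Set ↥(CC Y)) = univ := by
          ext K
          simp only [ccDia, mem_setOf_eq, inter_univ, mem_univ, iff_true]
          exact K.2.1
        rw [this]; exact Filter.univ_mem
      simpa using key univ isClopen_univ hu
    · rw [← isOpen_compl_iff, isOpen_iff_forall_mem_open]
      intro x hx
      rw [mem_compl_iff, hCdef, mem_setOf_eq] at hx
      push_neg at hx
      obtain ⟨V, hV, hxV, hnV⟩ := hx
      exact ⟨V, fun u hu huC => hnV (huC V hV hu), hV.2, hxV⟩
    · intro x hx y hy hne
      by_contra hcmp
      push_neg at hcmp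
      obtain ⟨U1, hU1, hU1u, hxU1, hyU1⟩ := exists_isClopen_upper_of_not_le hcmp.1
      obtain ⟨U2, hU2, hU2u, hyU2, hxU2⟩ := exists_isClopen_upper_of_not_le hcmp.2
      have h1 : (ccDia (U1 ∩ U2ᶜ) : Set ↥(CC Y)) ∈ 𝒰 := hx _ (hU1.inter hU2.compl) ⟨hxU1, hxU2⟩
      have h2 : (ccDia (U2 ∩ U1ᶜ) : Set ↥(CC Y)) ∈ 𝒰 := hy _ (hU2.inter hU1.compl) ⟨hyU2, hyU1⟩
      obtain ⟨K, hK1, hK2⟩ := Ultrafilter.nonempty_of_mem (Filter.inter_mem h1 h2)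
      obtain ⟨a, haK, haU1, haU2⟩ := hK1
      obtain ⟨b, hbK, hbU2, hbU1⟩ := hK2
      have hab : a ≠ b := fun e => hbU1 (e ▸ haU1)
      rcases K.2.2.2 haK hbK hab with h | h
      · exact hbU1 (hU1u h haU1)
      · exact haU2 (hU2u h hbU2)
  refine ⟨⟨C, hCcc⟩, mem_univ _, ?_⟩
  have : Filter.Tendsto id (↑𝒰) (nhds (⟨C, hCcc⟩ : ↥(CC Y))) := by
    refine tendsto_nhds_generateFrom_iff.mpr ?_
    rintro s ⟨V, hV, hor⟩ hmem
    rcases hor with rfl | rfl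
    · rw [preimage_id]
      by_contra hn
      have := key Vᶜ hV.compl (by rw [← compl_ccBox]; exact Ultrafilter.compl_mem_iff_notMem.2 hn)
      obtain ⟨z, hzC, hzV⟩ := this
      exact hzV (hmem hzC)
    · rw [preimage_id]
      obtain ⟨z, hzC, hzV⟩ := hmem
      exact hzC V hV hzV
  exact Filter.tendsto_id'.mp this

end Compactness

section Closedness

variable {Y : Type*} [TopologicalSpace Y] [PartialOrder Y] [CompactSpace Y] [PriestleySpace Y]

lemma lec_sep {K C : ↥(CC Y)} (h : ¬ lec (K : Set Y) (C : Set Y)) :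
    ∃ N O : Set ↥(CC Y), IsOpen N ∧ IsOpen O ∧ K ∈ N ∧ C ∈ O ∧
      ∀ K' ∈ N, ∀ C' ∈ O, ¬ lec (K' : ↥(CC Y)).val (C' : ↥(CC Y)).val := by
  rw [lec, not_and_or] at h
  rcases h with h | h
  · rw [not_subset] at h
    obtain ⟨x, hxC, hxK⟩ := h
    obtain ⟨W, hW, hxW, hWK⟩ := sep_closed K.2.2.1 hxK
    refine ⟨ccBox Wᶜ, ccDia W, isOpen_ccBox hW.compl, isOpen_ccDia hW, ?_, ⟨x, hxC, hxW⟩, ?_⟩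
    · intro z hz hzW
      exact absurd (Set.ext_iff.1 hWK z) (by simp [hzW, hz])
    · intro K' hK' C' hC' hlec
      obtain ⟨a, haC', haW⟩ := hC'
      exact hK' (hlec.1 haC') haW
  · push_neg at h
    obtain ⟨x, hxC, y, hyK, hxy, hyC⟩ := h
    have hxyne : x ≠ y := fun e => hyC (e ▸ hxC)
    have hnylex : ¬ y ≤ x := fun h' => hxyne (le_antisymm hxy h')
    obtain ⟨U, hU, hUup, hyU, hxU⟩ := exists_isClopen_upper_of_not_le hnylex
    obtain ⟨W, hW, hyW, hWC⟩ := sep_closed C.2.2.1 hyC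
    refine ⟨ccDia (W ∩ U), ccDia Uᶜ ∩ ccBox (W ∩ U)ᶜ, isOpen_ccDia (hW.inter hU),
      (isOpen_ccDia hU.compl).inter (isOpen_ccBox (hW.inter hU).compl),
      ⟨y, hyK, hyW, hyU⟩, ⟨⟨x, hxC, hxU⟩, ?_⟩, ?_⟩
    · intro z hz hzA
      exact absurd (Set.ext_iff.1 hWC z) (by simp [hzA.1, hz])
    · rintro K' ⟨a, haK', haA⟩ C' ⟨⟨b, hbC', hbU⟩, hC'A⟩ hlec
      have hbK' := hlec.1 hbC'
      rcases eq_or_ne b a with rfl | hne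
      · exact hbU haA.2
      rcases K'.2.2.2 hbK' haK' hne with hba | hab
      · exact hC'A (hlec.2 b hbC' a haK' hba) haA
      · exact hbU (hUup hab haA.2)

lemma isClosed_ccUp {𝒱 : Set ↥(CC Y)} (h𝒱 : IsClosed 𝒱) : IsClosed (ccUp 𝒱) := by
  classical
  rw [← isOpen_compl_iff, isOpen_iff_forall_mem_open]
  intro C hC
  have hsep : ∀ K : ↥𝒱, ∃ N O : Set ↥(CC Y), IsOpen N ∧ IsOpen O ∧ K.val ∈ N ∧ C ∈ O ∧
      ∀ K' ∈ N, ∀ C' ∈ O, ¬ lec (K' : ↥(CC Y)).val (C' : ↥(CC Y)).val :=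
    fun K => lec_sep (fun hl => hC ⟨K.val, K.2, hl⟩)
  choose N O hNo hOo hKN hCO hkill using hsep
  obtain ⟨t, ht⟩ := h𝒱.isCompact.elim_finite_subcover N hNo
    (fun K hK => mem_iUnion.2 ⟨⟨K, hK⟩, hKN ⟨K, hK⟩⟩)
  refine ⟨⋂ K ∈ t, O K, ?_, isOpen_biInter_finset fun K _ => hOo K, mem_iInter₂.2 fun K _ => hCO K⟩
  intro C' hC' hC'up
  obtain ⟨K, hK𝒱, hl⟩ := hC'up
  obtain ⟨i, hit, hKN'⟩ := mem_iUnion₂.1 (ht hK𝒱)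
  exact hkill i K hKN' C' (mem_iInter₂.1 hC' i hit) hl

end Closedness

section Openness

variable {Y : Type*} [TopologicalSpace Y] [PartialOrder Y] [CompactSpace Y] [PriestleySpace Y]

lemma finset_chain_max {α : Type*} (f : α → Y) (t : Finset α) (hne : t.Nonempty)
    (hcmp : ∀ a ∈ t, ∀ b ∈ t, f a ≤ f b ∨ f b ≤ f a) : ∃ a ∈ t, ∀ b ∈ t, f b ≤ f a := by
  classical
  revert hne hcmp
  induction t using Finset.induction with
  | empty => intro hne _; exact absurd rfl hne.ne_empty
  | @insert a s ha ih =>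
    intro hne hcmp
    rcases s.eq_empty_or_nonempty with rfl | hs
    · refine ⟨a, Finset.mem_insert_self _ _, fun b hb => ?_⟩
      rcases Finset.mem_insert.1 hb with rfl | hb
      · exact le_rfl
      · exact absurd hb (Finset.notMem_empty b)
    · obtain ⟨m, hms, hmmax⟩ := ih hs (fun x hx y hy =>
        hcmp x (Finset.mem_insert_of_mem hx) y (Finset.mem_insert_of_mem hy))
      rcases hcmp a (Finset.mem_insert_self _ _) m (Finset.mem_insert_of_mem hms) with h | h
      · refine ⟨m, Finset.mem_insert_of_mem hms, fun b hb => ?_⟩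
        rcases Finset.mem_insert.1 hb with rfl | hb
        · exact h
        · exact hmmax b hb
      · refine ⟨a, Finset.mem_insert_self _ _, fun b hb => ?_⟩
        rcases Finset.mem_insert.1 hb with rfl | hb
        · exact le_rfl
        · exact (hmmax b hb).trans h

lemma claim_lemma (hco : ∀ V : Set Y, IsClopen V → IsClopen {x : Y | ∃ y ∈ V, y ≤ x})
    (W : Set Y) (dd : Set Y → Y) (t : Finset (Set Y))
    (hprops : ∀ V ∈ t, IsClopen V ∧ V ⊆ W ∧ dd V ∈ V)
    (hcmp : ∀ V ∈ t, ∀ V' ∈ t, dd V ≤ dd V' ∨ dd V' ≤ dd V) :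
    ∃ U : Set Y, IsClopen U ∧
      (∀ x : Y, (∀ V ∈ t, dd V ≤ x) → ∃ u ∈ U, u ≤ x) ∧
      (∀ x u, u ∈ U → u ≤ x → ∃ F : Finset Y,
        (↑F : Set Y) ⊆ W ∧ IsChain (· ≤ ·) (↑F : Set Y) ∧ (∀ f ∈ F, f ≤ x) ∧
        ∀ V ∈ t, ∃ f ∈ F, f ∈ V) := by
  classical
  induction t using Finset.strongInduction with
  | _ t ih =>
    rcases t.eq_empty_or_nonempty with rfl | hne
    · exact ⟨univ, isClopen_univ, fun x _ => ⟨x, mem_univ x, le_rfl⟩,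
        fun x u _ _ => ⟨∅, by simp, by simp, by simp, by simp⟩⟩
    · obtain ⟨Vj, hVjt, hVjmax⟩ := finset_chain_max dd t hne hcmp
      have ht'ss : t.erase Vj ⊂ t := Finset.erase_ssubset hVjt
      obtain ⟨U', hU'c, hU'hit, hU'prod⟩ := ih (t.erase Vj) ht'ss
        (fun V hV => hprops V (Finset.mem_of_mem_erase hV))
        (fun V hV V' hV' => hcmp V (Finset.mem_of_mem_erase hV) V' (Finset.mem_of_mem_erase hV'))
      refine ⟨Vj ∩ {x | ∃ u ∈ U', u ≤ x}, (hprops Vj hVjt).1.inter (hco U' hU'c), ?_, ?_⟩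
      · intro x hx
        refine ⟨dd Vj, ⟨(hprops Vj hVjt).2.2, ?_⟩, hx Vj hVjt⟩
        exact hU'hit (dd Vj) (fun V hV => hVjmax V (Finset.mem_of_mem_erase hV))
      · rintro x u ⟨huVj, u', hu'U', hu'u⟩ hux
        obtain ⟨F', hF'W, hF'ch, hF'le, hF'hits⟩ := hU'prod u u' hu'U' hu'u
        refine ⟨insert u F', ?_, ?_, ?_, ?_⟩
        · rw [Finset.coe_insert]
          exact insert_subset ((hprops Vj hVjt).2.1 huVj) hF'W
        · rw [Finset.coe_insert]
          exact hF'ch.insert (fun b hb _ => Or.inr (hF'le b hb))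
        · intro f hf
          rcases Finset.mem_insert.1 hf with rfl | hf
          · exact hux
          · exact (hF'le f hf).trans hux
        · intro V hV
          rcases eq_or_ne V Vj with rfl | hVne
          · exact ⟨u, Finset.mem_insert_self _ _, huVj⟩
          · obtain ⟨fz, hfF, hfV⟩ := hF'hits V (Finset.mem_erase.2 ⟨hVne, hV⟩)
            exact ⟨fz, Finset.mem_insert_of_mem hfF, hfV⟩

end Openness

section MainOpen

variable {Y : Type*} [TopologicalSpace Y] [PartialOrder Y] [CompactSpace Y] [PriestleySpace Y]

lemma isOpen_ccUp (hco : ∀ V : Set Y, IsClopen V → IsClopen {x : Y | ∃ y ∈ V, y ≤ x})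
    {𝒱 : Set ↥(CC Y)} (h𝒱 : IsOpen 𝒱) : IsOpen (ccUp 𝒱) := by
  classical
  rw [isOpen_iff_forall_mem_open]
  rintro C ⟨K, hK𝒱, hlec⟩
  obtain ⟨b, hbB, hKb, hb𝒱⟩ :=
    (isTopologicalBasis_of_subbasis (ccSub_def (Z := Y))).exists_subset_of_mem_open hK𝒱 h𝒱
  obtain ⟨f, ⟨hffin, hfsub⟩, rfl⟩ := hbB
  haveI : Nonempty Y := ⟨K.2.1.some⟩
  have hgs : ∀ s ∈ f, ∃ V : Set Y, IsClopen V ∧ (s = ccBox V ∨ s = ccDia V) := fun s hs => hfsub hs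
  choose! g hg1 hg2 using hgs
  set fS : Finset (Set ↥(CC Y)) := hffin.toFinset with hfS
  have hfSf : ∀ s, s ∈ fS ↔ s ∈ f := fun s => hffin.mem_toFinset
  set fB : Finset (Set ↥(CC Y)) := fS.filter (fun s => s = ccBox (g s)) with hfB
  set W : Set Y := ⋂ s ∈ fB, g s with hW
  have hWclo : IsClopen W :=
    isClopen_biInter_finset fun s hs => hg1 s ((hfSf s).1 (Finset.mem_of_mem_filter s hs))
  have hKf : ∀ s ∈ f, K ∈ s := fun s hs => mem_sInter.1 hKb s hs
  have hKW : (K : Set Y) ⊆ W := by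
    intro z hz
    rw [hW, mem_iInter₂]
    intro s hs
    have hsf := (hfSf s).1 (Finset.mem_of_mem_filter s hs)
    have hbox := (Finset.mem_filter.1 hs).2
    have := hKf s hsf
    rw [hbox] at this
    exact this hz
  have hWsub : ∀ s ∈ fB, W ⊆ g s := fun s hs => biInter_subset_of_mem hs
  set fd : Finset (Set ↥(CC Y)) := fS.filter (fun s => ¬ s = ccBox (g s)) with hfd
  have hdia : ∀ s ∈ fd, s = ccDia (g s) := by
    intro s hs
    have hsf := (hfSf s).1 (Finset.mem_of_mem_filter s hs)
    exact (hg2 s hsf).resolve_left (Finset.mem_filter.1 hs).2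
  have hkk : ∀ s ∈ fd, ∃ z, z ∈ (K : Set Y) ∧ z ∈ g s := by
    intro s hs
    have := hKf s ((hfSf s).1 (Finset.mem_of_mem_filter s hs))
    rw [hdia s hs] at this
    obtain ⟨z, hz1, hz2⟩ := this
    exact ⟨z, hz1, hz2⟩
  choose! kk hkkK hkkg using hkk
  set fd1 : Finset (Set ↥(CC Y)) := fd.filter (fun s => kk s ∈ (C : Set Y)) with hfd1
  set fd2 : Finset (Set ↥(CC Y)) := fd.filter (fun s => kk s ∉ (C : Set Y)) with hfd2
  set t₀ : Finset (Set Y) := fd2.image (fun s => g s ∩ W) with ht₀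
  have ht₀w : ∀ V ∈ t₀, ∃ d, d ∈ (K : Set Y) ∧ d ∉ (C : Set Y) ∧ d ∈ V := by
    intro V hV
    obtain ⟨s, hs, rfl⟩ := Finset.mem_image.1 hV
    have hsfd := Finset.mem_of_mem_filter s hs
    exact ⟨kk s, hkkK s hsfd, (Finset.mem_filter.1 hs).2,
      hkkg s hsfd, hKW (hkkK s hsfd)⟩
  choose! dd hddK hddC hddV using ht₀w
  have hbelow : ∀ d, d ∈ (K : Set Y) → d ∉ (C : Set Y) → ∀ c ∈ (C : Set Y), d ≤ c := by
    intro d hdK hdC c hc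
    have hcK := hlec.1 hc
    have hne : d ≠ c := fun e => hdC (e ▸ hc)
    rcases K.2.2.2 hdK hcK hne with h | h
    · exact h
    · exact absurd (hlec.2 c hc d hdK h) hdC
  have hprops : ∀ V ∈ t₀, IsClopen V ∧ V ⊆ W ∧ dd V ∈ V := by
    intro V hV
    obtain ⟨s, hs, rfl⟩ := Finset.mem_image.1 hV
    have hsfd := Finset.mem_of_mem_filter s hs
    have hVmem : (g s ∩ W) ∈ t₀ := Finset.mem_image.2 ⟨s, hs, rfl⟩
    exact ⟨(hg1 s ((hfSf s).1 (Finset.mem_of_mem_filter s hsfd))).inter hWclo,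
      inter_subset_right, hddV _ hVmem⟩
  have hcmp : ∀ V ∈ t₀, ∀ V' ∈ t₀, dd V ≤ dd V' ∨ dd V' ≤ dd V := by
    intro V hV V' hV'
    rcases eq_or_ne (dd V) (dd V') with h | h
    · exact Or.inl (le_of_eq h)
    · exact K.2.2.2 (hddK V hV) (hddK V' hV') h
  obtain ⟨U, hUclo, hUhit, hUprod⟩ := claim_lemma hco W dd t₀ hprops hcmp
  set upU : Set Y := {x : Y | ∃ u ∈ U, u ≤ x} with hupU
  have hupUclo : IsClopen upU := hco U hUclo
  refine ⟨ccBox (W ∩ upU) ∩ ⋂ s ∈ fd1, ccDia (g s ∩ W), ?_, ?_, ?_, ?_⟩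
  · -- subset of ccUp 𝒱
    rintro C' ⟨hC'box, hC'dias⟩
    obtain ⟨m, hmC', hmmin⟩ := chain_min C'.2
    obtain ⟨u, huU, hum⟩ := (hC'box hmC').2
    obtain ⟨F, hFW, hFch, hFle, hFhits⟩ := hUprod m u huU hum
    set K'set : Set Y := (C' : Set Y) ∪ ↑F with hK'set
    have hK'CC : K'set ∈ CC Y := by
      refine ⟨C'.2.1.inl, C'.2.2.1.union F.finite_toSet.isClosed, ?_⟩
      intro a ha b hb hne
      rcases ha with ha | ha <;> rcases hb with hb | hb
      · exact C'.2.2.2 ha hb hne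
      · exact Or.inr ((hFle b hb).trans (hmmin a ha))
      · exact Or.inl ((hFle a ha).trans (hmmin b hb))
      · exact hFch ha hb hne
    have hK'f : ∀ s ∈ f, (⟨K'set, hK'CC⟩ : ↥(CC Y)) ∈ s := by
      intro s hs
      have hsfS : s ∈ fS := (hfSf s).2 hs
      by_cases hbox : s = ccBox (g s)
      · have hsfB : s ∈ fB := Finset.mem_filter.2 ⟨hsfS, hbox⟩
        rw [hbox]
        refine union_subset ?_ ?_ |>.trans (hWsub s hsfB)
        · exact fun z hz => (hC'box hz).1
        · exact hFW
      · have hsfd : s ∈ fd := Finset.mem_filter.2 ⟨hsfS, hbox⟩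
        rw [hdia s hsfd]
        by_cases hmem : kk s ∈ (C : Set Y)
        · have hsfd1 : s ∈ fd1 := Finset.mem_filter.2 ⟨hsfd, hmem⟩
          obtain ⟨z, hzC', hzg, _⟩ := mem_iInter₂.1 hC'dias s hsfd1
          exact ⟨z, Or.inl hzC', hzg⟩
        · have hsfd2 : s ∈ fd2 := Finset.mem_filter.2 ⟨hsfd, hmem⟩
          obtain ⟨fz, hfzF, hfzg, _⟩ := hFhits (g s ∩ W) (Finset.mem_image.2 ⟨s, hsfd2, rfl⟩)
          exact ⟨fz, Or.inr hfzF, hfzg⟩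
    refine ⟨⟨K'set, hK'CC⟩, hb𝒱 (mem_sInter.2 hK'f), ?_, ?_⟩
    · exact subset_union_left
    · intro a ha y hy hay
      rcases hy with hy | hy
      · exact hy
      · have : y ≤ a := (hFle y hy).trans (hmmin a ha)
        have : a = y := le_antisymm hay this
        exact this ▸ ha
  · exact (isOpen_ccBox (hWclo.inter hupUclo)).inter
      (isOpen_biInter_finset fun s hs => isOpen_ccDia
        ((hg1 s ((hfSf s).1 (Finset.mem_of_mem_filter s (Finset.mem_of_mem_filter s hs)))).inter hWclo))
  · intro z hz
    exact ⟨hKW (hlec.1 hz), hUhit z (fun V hV => hbelow (dd V) (hddK V hV) (hddC V hV) z hz)⟩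
  · refine mem_iInter₂.2 fun s hs => ?_
    have hsfd := Finset.mem_of_mem_filter s hs
    exact ⟨kk s, (Finset.mem_filter.1 hs).2, hkkg s hsfd, hKW (hkkK s hsfd)⟩

end MainOpen

/-- `CC(X)` is a bi-Esakia space iff `X` is a co-Esakia space: the `⊴`-upset of every
clopen subset of `CC(X)` is clopen iff the upset of every clopen subset of `X` is clopen. -/
theorem stmt13 (X : Type*) [TopologicalSpace X] [PartialOrder X] [CompactSpace X]
    [PriestleySpace X] :
    (∀ 𝒱 : Set ↥(CC X), IsClopen 𝒱 → IsClopen (ccUp 𝒱)) ↔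
    (∀ V : Set X, IsClopen V → IsClopen {x : X | ∃ y ∈ V, y ≤ x}) := by
  constructor
  · intro h V hV
    have hsing : ∀ x : X, ({x} : Set X) ∈ CC X :=
      fun x => ⟨singleton_nonempty x, isClosed_singleton, Set.Subsingleton.isChain subsingleton_singleton⟩
    set ι : X → ↥(CC X) := fun x => ⟨{x}, hsing x⟩ with hι
    have hcont : Continuous ι := by
      apply continuous_generateFrom_iff.mpr
      rintro s ⟨V', hV', hor⟩
      rcases hor with rfl | rfl
      · have he : ι ⁻¹' ccBox V' = V' := by
          ext x; simp [ccBox, hι, singleton_subset_iff]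
        rw [he]; exact hV'.2
      · have he : ι ⁻¹' ccDia V' = V' := by
          ext x; simp [ccDia, hι, singleton_inter_nonempty]
        rw [he]; exact hV'.2
    have h2 := h (ccDia V) (isClopen_ccDia hV)
    have hEq : {x : X | ∃ y ∈ V, y ≤ x} = ι ⁻¹' (ccUp (ccDia V)) := by
      ext x
      constructor
      · rintro ⟨y, hyV, hyx⟩
        have hpair : ({y, x} : Set X) ∈ CC X := by
          refine ⟨⟨y, mem_insert _ _⟩, (Set.toFinite _).isClosed, ?_⟩
          intro a ha b hb hne
          rcases ha with rfl | ha <;> rcases hb with rfl | hb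
          · exact absurd rfl hne
          · rcases hb with rfl; exact Or.inl hyx
          · rcases ha with rfl; exact Or.inr hyx
          · rcases ha with rfl; rcases hb with rfl; exact absurd rfl hne
        refine ⟨⟨{y, x}, hpair⟩, ⟨y, mem_insert _ _, hyV⟩, ?_, ?_⟩
        · exact singleton_subset_iff.2 (mem_insert_of_mem _ rfl)
        · rintro a rfl b hb hab
          rcases hb with rfl | hb
          · exact le_antisymm hyx hab ▸ rfl
          · rcases hb with rfl; rfl
      · rintro ⟨K, ⟨z, hzK, hzV⟩, hlec⟩
        have hxK : x ∈ (K : Set X) := hlec.1 rfl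
        rcases eq_or_ne z x with rfl | hne
        · exact ⟨z, hzV, le_rfl⟩
        rcases K.2.2.2 hzK hxK hne with hzx | hxz
        · exact ⟨z, hzV, hzx⟩
        · have := hlec.2 x rfl z hzK hxz
          rcases this with rfl
          exact ⟨z, hzV, le_rfl⟩
    rw [hEq]
    exact h2.preimage hcont
  · intro hco 𝒱 h𝒱
    exact ⟨isClosed_ccUp h𝒱.1, isOpen_ccUp hco h𝒱.2⟩
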